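/- arXiv:math/0601751 — 3 statements merged into one kernel-verified Lean document; each statement's English description precedes it below -/
import Mathlib

section
/- Let n ≥ 3, let U ⊆ ℝⁿ be open, and let σ be a smooth map from U to 2-forms satisfying the flat conformal Killing equation (k = 2). Define the vector field (as a 1-form) v(x)(a) := Σ_{p=1}^{n} (Dσ(x)eₚ)(a,eₚ). Then v is a Killing field for the Euclidean metric: for all x ∈ U and all u, w ∈ ℝⁿ, (Dv(x)u)(w) + (Dv(x)w)(u) = 0. -/
open scoped RealInnerProductSpace BigOperators

noncomputable section

/-- Euclidean `n`-space. -/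
abbrev Euc (n : ℕ) : Type := EuclideanSpace ℝ (Fin n)

/-- Continuous `k`-linear maps `(ℝⁿ)ᵏ → ℝ`. -/
abbrev FormML (n k : ℕ) : Type :=
  ContinuousMultilinearMap ℝ (fun _ : Fin k => Euc n) ℝ

/-- A multilinear map is alternating (vanishes when two arguments coincide);
together with multilinearity this makes it a `k`-form. -/
def IsAlt {n k : ℕ} (f : FormML n k) : Prop :=
  ∀ (v : Fin k → Euc n) (i j : Fin k), i ≠ j → v i = v j → f v = 0

/-- The tuple `a` with its `i`-th entry omitted. -/
def omitArg {X : Type*} {k : ℕ} (i : Fin k) (a : Fin k → X) (j : Fin (k - 1)) : X :=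
  if (j : ℕ) < (i : ℕ) then a ⟨j, by have := j.isLt; have := i.isLt; omega⟩
  else a ⟨(j : ℕ) + 1, by have := j.isLt; omega⟩

/-- The tuple `(c, d₁, …, d_{k-1})`. -/
def consCast {X : Type*} {k : ℕ} (c : X) (d : Fin (k - 1) → X) (j : Fin k) : X :=
  if h : (j : ℕ) = 0 then c else d ⟨(j : ℕ) - 1, by have := j.isLt; omega⟩

/-- The flat (Euclidean) conformal Killing equation on `k`-forms:
`σ` is smooth on `U`, valued in alternating maps, and there are smooth form-valued
`τ` (degree `k-1`) and `ρ` (degree `k+1`) with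
`(Dσ(x)c)(a₁,…,a_k) = Σᵢ (-1)^(i+1) ⟨c,aᵢ⟩ τ(x)(a₁,…,âᵢ,…,a_k) + ρ(x)(c,a₁,…,a_k)`. -/
def FlatCKF (n k : ℕ) (U : Set (Euc n)) (σ : Euc n → FormML n k) : Prop :=
  ContDiffOn ℝ (⊤ : ℕ∞) σ U ∧ (∀ x ∈ U, IsAlt (σ x)) ∧
  ∃ (τ : Euc n → FormML n (k - 1)) (ρ : Euc n → FormML n (k + 1)),
    ContDiffOn ℝ (⊤ : ℕ∞) τ U ∧ ContDiffOn ℝ (⊤ : ℕ∞) ρ U ∧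
    (∀ x ∈ U, IsAlt (τ x)) ∧ (∀ x ∈ U, IsAlt (ρ x)) ∧
    ∀ x ∈ U, ∀ (c : Euc n) (a : Fin k → Euc n),
      (fderiv ℝ σ x c) a =
        (∑ i : Fin k, (-1 : ℝ) ^ (i : ℕ) * ⟪c, a i⟫ * τ x (omitArg i a))
        + ρ x (consCast c a)

/-!
Tracing the equation over an orthonormal basis `(eₚ)` with `a = (w, eₚ)` kills the `ρ`-term and
gives `v = (1 - n) τ`, so it suffices that `T = Dτ(x)` is antisymmetric. Differentiating the
equation once more, the symmetry of `D²σ(x)` yields an identity between `T` and `R = Dρ(x)`.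
Tracing that identity twice gives `(2n - 2) tr T = 0`, and then
`(n - 2) (T(c, z) + T(z, c)) = 0`, the `R`-terms cancelling because each `R b` is alternating.
-/

open Filter Topology

section Algebra

variable {E : Type*} [NormedAddCommGroup E] [InnerProductSpace ℝ E]
  {ι : Type*} [Fintype ι]

theorem OrthonormalBasis.sum_inner_mul_apply (b : OrthonormalBasis ι ℝ E) (f : E →ₗ[ℝ] ℝ)
    (x : E) : ∑ i, ⟪b i, x⟫ * f (b i) = f x := by
  conv_rhs => rw [← b.sum_repr' x]
  simp [map_sum]

/-- The identity satisfied by `T = Dτ(x)` and `R = Dρ(x)`, read off from the symmetry of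
`D²σ(x)` in the flat conformal Killing equation for 2-forms. -/
def CKFIntegrability (T : LinearMap.BilinForm ℝ E) (R : E → E [⋀^Fin 3]→ₗ[ℝ] ℝ) : Prop :=
  ∀ b c a₀ a₁ : E,
    ⟪c, a₀⟫ * T b a₁ - ⟪c, a₁⟫ * T b a₀ + R b ![c, a₀, a₁] =
      ⟪b, a₀⟫ * T c a₁ - ⟪b, a₁⟫ * T c a₀ + R c ![b, a₀, a₁]

variable {T : LinearMap.BilinForm ℝ E} {R : E → E [⋀^Fin 3]→ₗ[ℝ] ℝ}

theorem CKFIntegrability.sum_basis (h : CKFIntegrability T R)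
    (b : OrthonormalBasis ι ℝ E) (c z : E) :
    T c z - ⟪c, z⟫ * ∑ p, T (b p) (b p) + ∑ p, R (b p) ![c, b p, z] =
      (Fintype.card ι - 1) * T c z := by
  have hp : ∀ p, ⟪b p, c⟫ * T (b p) z - ⟪c, z⟫ * T (b p) (b p) + R (b p) ![c, b p, z] =
      T c z - ⟪b p, z⟫ * T c (b p) := by
    intro p
    have h' := h (b p) c (b p) z
    rwa [real_inner_self_eq_norm_sq, b.norm_eq_one, one_pow, one_mul,
      (R c).map_eq_zero_of_eq _ (i := 0) (j := 1) rfl (by decide), add_zero,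
      real_inner_comm] at h'
  have hexpand : ∑ p, ⟪b p, c⟫ * T (b p) z = T c z := b.sum_inner_mul_apply (T.flip z) c
  have := Fintype.sum_congr _ _ hp
  simp only [Finset.sum_add_distrib, Finset.sum_sub_distrib, ← Finset.mul_sum, hexpand,
    b.sum_inner_mul_apply (T c), Finset.sum_const, Finset.card_univ, nsmul_eq_mul] at this
  linarith

theorem CKFIntegrability.sum_basis_diag_eq_zero (h : CKFIntegrability T R)
    (b : OrthonormalBasis ι ℝ E) (hι : 2 ≤ Fintype.card ι) :
    ∑ p, T (b p) (b p) = 0 := by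
  have hq : ∀ q, T (b q) (b q) - ∑ p, T (b p) (b p) = (Fintype.card ι - 1) * T (b q) (b q) := by
    intro q
    have := h.sum_basis b (b q) (b q)
    rwa [real_inner_self_eq_norm_sq, b.norm_eq_one, one_pow, one_mul,
      Finset.sum_eq_zero fun p _ => (R (b p)).map_eq_zero_of_eq _ (i := 0) (j := 2) rfl
        (by decide), add_zero] at this
  have := Fintype.sum_congr _ _ hq
  simp only [Finset.sum_sub_distrib, ← Finset.mul_sum, Finset.sum_const, Finset.card_univ,
    nsmul_eq_mul] at this
  have hι' : (2 : ℝ) ≤ Fintype.card ι := by exact_mod_cast hι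
  have : (2 * (Fintype.card ι : ℝ) - 2) * ∑ p, T (b p) (b p) = 0 := by linarith
  exact (mul_eq_zero.mp this).resolve_left (by linarith)

theorem CKFIntegrability.add_swap_eq_zero [FiniteDimensional ℝ E]
    (h : CKFIntegrability T R) (hE : 3 ≤ Module.finrank ℝ E) (c z : E) :
    T c z + T z c = 0 := by
  set b := stdOrthonormalBasis ℝ E
  have htrace := h.sum_basis_diag_eq_zero b (by rw [Fintype.card_fin]; omega)
  have hcz := h.sum_basis b c z
  have hzc := h.sum_basis b z c
  have hswap : ∑ p, R (b p) ![c, b p, z] = -∑ p, R (b p) ![z, b p, c] := by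
    rw [← Finset.sum_neg_distrib]
    refine Fintype.sum_congr _ _ fun p => ?_
    rw [← (R (b p)).map_swap ![z, b p, c] (i := 0) (j := 2) (by decide)]
    congr 1
    ext i
    fin_cases i <;> rfl
  rw [htrace, mul_zero, sub_zero, Fintype.card_fin] at hcz hzc
  have hE' : (3 : ℝ) ≤ Module.finrank ℝ E := by exact_mod_cast hE
  have : ((Module.finrank ℝ E : ℝ) - 2) * (T c z + T z c) = 0 := by linarith
  exact (mul_eq_zero.mp this).resolve_left (by linarith)

end Algebra

section Forms

variable {n : ℕ}

theorem continuousMultilinearCurryFin1_apply_const (f : FormML n 1) (a : Euc n) :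
    continuousMultilinearCurryFin1 ℝ (Euc n) ℝ f a = f (fun _ => a) :=
  congrArg f (funext fun i => by fin_cases i; rfl)

def bilinOfForms (L : Euc n →L[ℝ] FormML n 1) : LinearMap.BilinForm ℝ (Euc n) :=
  ((continuousMultilinearCurryFin1 ℝ (Euc n) ℝ : FormML n 1 →L[ℝ] Euc n →L[ℝ] ℝ).comp
    L).toLinearMap₁₂

@[simp]
theorem bilinOfForms_apply (L : Euc n →L[ℝ] FormML n 1) (b a : Euc n) :
    bilinOfForms L b a = L b (fun _ => a) :=
  continuousMultilinearCurryFin1_apply_const (L b) a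

def IsAlt.toAlternatingMap {k : ℕ} {f : FormML n k} (hf : IsAlt f) :
    Euc n [⋀^Fin k]→ₗ[ℝ] ℝ :=
  { f.toMultilinearMap with map_eq_zero_of_eq' := fun v i j hv hij => hf v i j hij hv }

@[simp]
theorem IsAlt.toAlternatingMap_apply {k : ℕ} {f : FormML n k} (hf : IsAlt f)
    (v : Fin k → Euc n) : hf.toAlternatingMap v = f v :=
  rfl

theorem isAlt_fderiv {k : ℕ} {f : Euc n → FormML n k} {x : Euc n}
    (halt : ∀ᶠ y in 𝓝 x, IsAlt (f y)) (b : Euc n) : IsAlt (fderiv ℝ f x b) := by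
  intro v i j hij hv
  by_cases hf : DifferentiableAt ℝ f x
  · have hzero : (fun y => f y v) =ᶠ[𝓝 x] fun _ => 0 :=
      halt.mono fun y hy => hy v i j hij hv
    rw [← fderiv_continuousMultilinear_apply_const_apply hf, hzero.fderiv_eq]
    simp
  · simp [fderiv_zero_of_not_differentiableAt hf]

theorem sum_omitArg_add_consCast_two (f : FormML n (2 - 1)) (g : FormML n (2 + 1))
    (c a₀ a₁ : Euc n) :
    (∑ i : Fin 2, (-1 : ℝ) ^ (i : ℕ) * ⟪c, ![a₀, a₁] i⟫ * f (omitArg i ![a₀, a₁]))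
        + g (consCast c ![a₀, a₁]) =
      ⟪c, a₀⟫ * f (fun _ => a₁) - ⟪c, a₁⟫ * f (fun _ => a₀) + g ![c, a₀, a₁] := by
  have homit₀ : omitArg 0 ![a₀, a₁] = fun _ => a₁ := funext fun j => by fin_cases j; rfl
  have homit₁ : omitArg 1 ![a₀, a₁] = fun _ => a₀ := funext fun j => by fin_cases j; rfl
  have hcons : consCast c ![a₀, a₁] = ![c, a₀, a₁] := funext fun j => by fin_cases j <;> rfl
  simp [Fin.sum_univ_two, homit₀, homit₁, hcons, sub_eq_add_neg]

/-- The flat conformal Killing equation for 2-forms at a point, with `D = Dσ(x)`, `t = τ(x)` and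
`r = ρ(x)`. -/
def FlatCKFEqTwo (D : Euc n → FormML n 2) (t : FormML n 1) (r : FormML n 3) : Prop :=
  ∀ c a₀ a₁ : Euc n,
    D c ![a₀, a₁] = ⟪c, a₀⟫ * t (fun _ => a₁) - ⟪c, a₁⟫ * t (fun _ => a₀) + r ![c, a₀, a₁]

theorem FlatCKFEqTwo.sum_basis {ι : Type*} [Fintype ι] {D : Euc n → FormML n 2}
    {t : FormML n 1} {r : FormML n 3} (h : FlatCKFEqTwo D t r) (hr : IsAlt r)
    (b : OrthonormalBasis ι ℝ (Euc n)) (w : Euc n) :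
    ∑ p, D (b p) ![w, b p] = (1 - Fintype.card ι) * t (fun _ => w) := by
  have hterm : ∀ p, D (b p) ![w, b p] = ⟪b p, w⟫ * t (fun _ => b p) - t (fun _ => w) := by
    intro p
    rw [h, hr _ 0 2 (by decide) rfl, real_inner_self_eq_norm_sq, b.norm_eq_one]
    ring
  have hexpand : ∑ p, ⟪b p, w⟫ * t (fun _ => b p) = t (fun _ => w) := by
    simpa only [ContinuousLinearMap.coe_coe, continuousMultilinearCurryFin1_apply_const] using
      b.sum_inner_mul_apply (continuousMultilinearCurryFin1 ℝ (Euc n) ℝ t : Euc n →L[ℝ] ℝ) w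
  rw [Fintype.sum_congr _ _ hterm, Finset.sum_sub_distrib, hexpand, Finset.sum_const,
    Finset.card_univ, nsmul_eq_mul]
  ring

theorem fderiv_fderiv_apply_of_flatCKFEqTwo {σ : Euc n → FormML n 2} {τ : Euc n → FormML n 1}
    {ρ : Euc n → FormML n 3} {x : Euc n} (hσ : DifferentiableAt ℝ (fderiv ℝ σ) x)
    (hτ : DifferentiableAt ℝ τ x) (hρ : DifferentiableAt ℝ ρ x)
    (heq : ∀ᶠ y in 𝓝 x, FlatCKFEqTwo (fderiv ℝ σ y) (τ y) (ρ y)) (b c a₀ a₁ : Euc n) :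
    fderiv ℝ (fderiv ℝ σ) x b c ![a₀, a₁] =
      ⟪c, a₀⟫ * fderiv ℝ τ x b (fun _ => a₁) - ⟪c, a₁⟫ * fderiv ℝ τ x b (fun _ => a₀)
        + fderiv ℝ ρ x b ![c, a₀, a₁] := by
  have hrhs : (fun y => fderiv ℝ σ y c ![a₀, a₁]) =ᶠ[𝓝 x]
      fun y => ⟪c, a₀⟫ * τ y (fun _ => a₁) - ⟪c, a₁⟫ * τ y (fun _ => a₀) + ρ y ![c, a₀, a₁] :=
    heq.mono fun y hy => hy c a₀ a₁
  have hσc : DifferentiableAt ℝ (fun y => fderiv ℝ σ y c) x :=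
    hσ.clm_apply (differentiableAt_const c)
  have hσc' : fderiv ℝ (fun y => fderiv ℝ σ y c) x b = fderiv ℝ (fderiv ℝ σ) x b c := by
    simp [fderiv_clm_apply hσ (differentiableAt_const c)]
  have hτ' := fun a : Euc n => hτ.hasFDerivAt.continuousMultilinear_apply_const (fun _ => a)
  have hderiv := (((hτ' a₁).const_mul ⟪c, a₀⟫).fun_sub ((hτ' a₀).const_mul ⟪c, a₁⟫)).fun_add
    (hρ.hasFDerivAt.continuousMultilinear_apply_const ![c, a₀, a₁])
  rw [← hσc', ← fderiv_continuousMultilinear_apply_const_apply hσc, hrhs.fderiv_eq,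
    hderiv.fderiv]
  simp

theorem ckfIntegrability_fderiv {σ : Euc n → FormML n 2} {τ : Euc n → FormML n 1}
    {ρ : Euc n → FormML n 3} {x : Euc n} (hσ : ContDiffAt ℝ 2 σ x)
    (hτ : DifferentiableAt ℝ τ x) (hρ : DifferentiableAt ℝ ρ x)
    (hρalt : ∀ᶠ y in 𝓝 x, IsAlt (ρ y))
    (heq : ∀ᶠ y in 𝓝 x, FlatCKFEqTwo (fderiv ℝ σ y) (τ y) (ρ y)) :
    CKFIntegrability (bilinOfForms (fderiv ℝ τ x))
      fun b => (isAlt_fderiv hρalt b).toAlternatingMap := by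
  have hσ' : DifferentiableAt ℝ (fderiv ℝ σ) x :=
    (hσ.fderiv_right (m := 1) le_rfl).differentiableAt one_ne_zero
  intro b c a₀ a₁
  simp only [bilinOfForms_apply, IsAlt.toAlternatingMap_apply]
  rw [← fderiv_fderiv_apply_of_flatCKFEqTwo hσ' hτ hρ heq,
    ← fderiv_fderiv_apply_of_flatCKFEqTwo hσ' hτ hρ heq,
    hσ.isSymmSndFDerivAt minSmoothness_of_isRCLikeNormedField.le b c]

end Forms

/-- If `σ` is a flat conformal Killing 2-form on an open `U ⊆ ℝⁿ`, the
vector field (1-form) `v(x)(a) = Σₚ (Dσ(x)eₚ)(a,eₚ)` is a Killing field for the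
Euclidean metric: `(Dv(x)u)(w) + (Dv(x)w)(u) = 0`. -/
theorem flat_conformal_killing_two_form_gives_Killing_field
    (n : ℕ) (hn : 3 ≤ n)
    (U : Set (Euc n)) (hU : IsOpen U)
    (σ : Euc n → FormML n 2) (hσ : FlatCKF n 2 U σ) :
    ∀ x ∈ U, ∀ u w : Euc n,
      fderiv ℝ
        (fun y => ∑ p : Fin n,
          (fderiv ℝ σ y (EuclideanSpace.single p (1 : ℝ)))
            ![w, EuclideanSpace.single p (1 : ℝ)]) x u
      + fderiv ℝ
        (fun y => ∑ p : Fin n,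
          (fderiv ℝ σ y (EuclideanSpace.single p (1 : ℝ)))
            ![u, EuclideanSpace.single p (1 : ℝ)]) x w = 0 := by
  intro x hx u w
  obtain ⟨hσ, -, τ, ρ, hτ, hρ, -, hρalt, hkey⟩ := hσ
  have hUx : U ∈ 𝓝 x := hU.mem_nhds hx
  have heq : ∀ y ∈ U, FlatCKFEqTwo (fderiv ℝ σ y) (τ y) (ρ y) := fun y hy c a₀ a₁ =>
    (hkey y hy c ![a₀, a₁]).trans (sum_omitArg_add_consCast_two _ _ c a₀ a₁)
  have hτx : DifferentiableAt ℝ τ x := (hτ.contDiffAt hUx).differentiableAt (by simp)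
  have hanti := (ckfIntegrability_fderiv
    ((hσ.contDiffAt hUx).of_le (WithTop.coe_le_coe.mpr le_top)) hτx
    ((hρ.contDiffAt hUx).differentiableAt (by simp)) (eventually_of_mem hUx hρalt)
    (eventually_of_mem hUx heq)).add_swap_eq_zero (by simpa using hn) u w
  have hv : ∀ a, (fun y => ∑ p : Fin n,
      (fderiv ℝ σ y (EuclideanSpace.single p (1 : ℝ))) ![a, EuclideanSpace.single p (1 : ℝ)])
        =ᶠ[𝓝 x] fun y => (1 - n) * τ y (fun _ => a) := fun a =>
    eventually_of_mem hUx fun y hy => by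
      simpa using (heq y hy).sum_basis (hρalt y hy) (EuclideanSpace.basisFun (Fin n) ℝ) a
  have hvderiv := fun a =>
    (hτx.hasFDerivAt.continuousMultilinear_apply_const (fun _ => a)).const_mul (1 - (n : ℝ))
  rw [(hv w).fderiv_eq, (hv u).fderiv_eq, (hvderiv w).fderiv, (hvderiv u).fderiv]
  simp only [bilinOfForms_apply] at hanti
  simp [← mul_add, hanti]
end
end

section
/- Let k ≥ 1 and let f : V^{k+1} → ℝ be a (k+1)-linear map that is alternating in its last k arguments and whose alternation over all k+1 arguments vanishes (f ∈ E(1,k)). Then for all p, v₁, …, vₖ ∈ V: Σ_{π ∈ Sₖ} sgn(π) f(v_{π(1)}, p, v_{π(2)}, …, v_{π(k)}) = (k−1)! · f(p, v₁, …, vₖ). In the paper's index notation: f_{a¹ p ȧᵏ} = (1/k) f_{p ā ᵏ} for f ∈ E(1,k), where sequentially labelled indices are implicitly skewed over. -/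
/-!
For `g u x` alternating in `x`, write a permutation `σ` of `Fin (n + 1)` as `(σ 0).cycleRange⁻¹`
followed by a permutation fixing `0`: then `sign σ • g (w (σ 0)) (tail (w ∘ σ))` depends only on
`i = σ 0`, and equals `(-1)^i • g (w i) (removeNth i w)`. Hence the full alternation at `w` is
`n! • ∑ i, (-1)^i • g (w i) (removeNth i w)`.

For `f ∈ E(1,k)` at `(p, v)` this turns the vanishing of the full alternation into
`f (p, v) = ∑ j, (-1)^j f (v j, p, removeNth j v)`. The left-hand side of the theorem is the full
alternation at `v` of `(u, y) ↦ f (u, p, y)`, which is alternating in `y`, so by the same identity it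
is `(k-1)!` times that sum.
-/

open Equiv Equiv.Perm
open scoped Nat

theorem Fin.removeNth_succ_cons {α : Type*} {n : ℕ} (j : Fin (n + 1)) (a : α)
    (x : Fin (n + 1) → α) :
    j.succ.removeNth (Fin.cons a x : Fin (n + 2) → α) = Fin.cons a (j.removeNth x) := by
  ext i
  cases i using Fin.cases <;> simp [Fin.removeNth_apply]

theorem Fin.cons_comp_decomposeFin_symm_zero {α : Type*} {n : ℕ} (a : α) (x : Fin n → α)
    (τ : Perm (Fin n)) :
    (Fin.cons a x : Fin (n + 1) → α) ∘ decomposeFin.symm (0, τ) = Fin.cons a (x ∘ τ) := by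
  ext i
  cases i using Fin.cases <;>
    simp [decomposeFin_symm_apply_zero, decomposeFin_symm_apply_succ]

theorem Equiv.Perm.exists_decomposeFin_symm_zero_eq {n : ℕ} {ρ : Perm (Fin (n + 1))}
    (hρ : ρ 0 = 0) : ∃ τ : Perm (Fin n), decomposeFin.symm (0, τ) = ρ := by
  obtain ⟨⟨i, τ⟩, rfl⟩ := decomposeFin.symm.surjective ρ
  rw [decomposeFin_symm_apply_zero] at hρ
  exact ⟨τ, by rw [hρ]⟩

theorem Fin.dite_eq_cons_cons {α : Type*} {m : ℕ} (p : α) (x : Fin (m + 1) → α) :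
    (fun i : Fin (m + 2) =>
      if h0 : (i : ℕ) = 0 then x ⟨0, by omega⟩
      else if _h1 : (i : ℕ) = 1 then p
      else x ⟨(i : ℕ) - 1, by have := i.isLt; omega⟩) =
    Fin.cons (x 0) (Fin.cons p (Fin.tail x)) := by
  ext i
  rcases i with ⟨_ | _ | i, hi⟩ <;> rfl

section

variable {R M N : Type*} [Semiring R] [AddCommMonoid M] [Module R M] [AddCommGroup N]
  [Module R N] {n : ℕ}

theorem sign_smul_apply_tail_comp_perm (g : M → M [⋀^Fin n]→ₗ[R] N) (w : Fin (n + 1) → M)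
    (σ : Perm (Fin (n + 1))) :
    sign σ • g (w (σ 0)) (Fin.tail (w ∘ σ)) =
      (-1 : ℤ) ^ (σ 0 : ℕ) • g (w (σ 0)) ((σ 0).removeNth w) := by
  set i := σ 0
  obtain ⟨τ, hτ⟩ : ∃ τ : Perm (Fin n), decomposeFin.symm (0, τ) = i.cycleRange * σ :=
    exists_decomposeFin_symm_zero_eq (by simp [i])
  have hσ : σ = i.cycleRange⁻¹ * decomposeFin.symm (0, τ) := by
    rw [hτ, inv_mul_cancel_left]
  have hw : w ∘ σ = Fin.cons (w i) (i.removeNth w ∘ τ) := by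
    rw [hσ, Perm.coe_mul, Perm.coe_inv, ← Function.comp_assoc,
      ← Fin.cons_removeNth_eq_comp_cycleRange_symm, Fin.cons_comp_decomposeFin_symm_zero]
  have hsign : sign σ = (-1) ^ (i : ℕ) * sign τ := by
    rw [hσ, Perm.sign_mul, decomposeFin.symm_sign]
    simp
  rw [hw, Fin.tail_cons, (g (w i)).map_perm, hsign, smul_smul, mul_assoc, Int.units_mul_self,
    mul_one]
  simp [Units.smul_def]

theorem sum_sign_smul_apply_tail_comp_perm (g : M → M [⋀^Fin n]→ₗ[R] N)
    (w : Fin (n + 1) → M) :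
    ∑ σ : Perm (Fin (n + 1)), sign σ • g (w (σ 0)) (Fin.tail (w ∘ σ)) =
      n ! • ∑ i : Fin (n + 1), (-1 : ℤ) ^ (i : ℕ) • g (w i) (i.removeNth w) := by
  simp_rw [sign_smul_apply_tail_comp_perm]
  rw [← decomposeFin.symm.sum_comp, Fintype.sum_prod_type]
  simp only [decomposeFin_symm_apply_zero, Finset.sum_const, Finset.card_univ,
    Fintype.card_perm, Fintype.card_fin, Finset.smul_sum]

end

section

variable {R M N : Type*} [CommSemiring R] [AddCommMonoid M] [Module R M] [AddCommMonoid N]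
  [Module R N] {n : ℕ}

def MultilinearMap.curryLeftAlternating (f : MultilinearMap R (fun _ : Fin (n + 1) => M) N)
    (hf : ∀ u (x : Fin n → M) (i j : Fin n), x i = x j → i ≠ j → f (Fin.cons u x) = 0)
    (u : M) : M [⋀^Fin n]→ₗ[R] N where
  toMultilinearMap := f.curryLeft u
  map_eq_zero_of_eq' := hf u

@[simp]
theorem MultilinearMap.curryLeftAlternating_apply
    (f : MultilinearMap R (fun _ : Fin (n + 1) => M) N) (hf) (u : M) (x : Fin n → M) :
    f.curryLeftAlternating hf u x = f (Fin.cons u x) :=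
  rfl

end

/-- Let `f : V^{k+1} → ℝ` be `(k+1)`-linear, alternating in its last
`k` arguments, with vanishing full alternation (`f ∈ E(1,k)`). Then
`Σ_{π ∈ S_k} sgn(π) f(v_{π(1)}, p, v_{π(2)}, …, v_{π(k)}) = (k-1)! · f(p, v₁, …, v_k)`. -/
theorem E1k_swap_identity
    (V : Type*) [AddCommGroup V] [Module ℝ V]
    (k : ℕ) (hk : 1 ≤ k)
    (f : MultilinearMap ℝ (fun _ : Fin (k + 1) => V) ℝ)
    (halt : ∀ (w : Fin (k + 1) → V) (i j : Fin (k + 1)),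
      i ≠ j → 0 < (i : ℕ) → 0 < (j : ℕ) → w i = w j → f w = 0)
    (hfull : ∀ w : Fin (k + 1) → V,
      ∑ π : Equiv.Perm (Fin (k + 1)), ((Equiv.Perm.sign π : ℤ) : ℝ) * f (w ∘ π) = 0) :
    ∀ (p : V) (v : Fin k → V),
      ∑ π : Equiv.Perm (Fin k),
        ((Equiv.Perm.sign π : ℤ) : ℝ) *
          f (fun i : Fin (k + 1) =>
            if h0 : (i : ℕ) = 0 then v (π ⟨0, by omega⟩)
            else if h1 : (i : ℕ) = 1 then p
            else v (π ⟨(i : ℕ) - 1, by have := i.isLt; omega⟩))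
      = ((k - 1).factorial : ℝ) * f (Fin.cons p v) := by
  obtain ⟨m, rfl⟩ : ∃ m, k = m + 1 := ⟨k - 1, by omega⟩
  intro p v
  set g := f.curryLeftAlternating fun _ _ i j hx hij =>
    halt _ i.succ j.succ ((Fin.succ_injective _).ne hij) i.succ_pos j.succ_pos (by simpa using hx)
  have hfull_eq (w : Fin (m + 2) → V) :
      ∑ π : Perm (Fin (m + 2)), ((sign π : ℤ) : ℝ) * f (w ∘ π) =
        (m + 1)! • ∑ i : Fin (m + 2), (-1 : ℤ) ^ (i : ℕ) • g (w i) (i.removeNth w) := by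
    rw [← sum_sign_smul_apply_tail_comp_perm]
    refine Finset.sum_congr rfl fun σ _ => ?_
    rw [Units.smul_def, zsmul_eq_mul, MultilinearMap.curryLeftAlternating_apply]
    exact congrArg _ (congrArg f (Fin.cons_self_tail (w ∘ σ)).symm)
  have hexpand : ∑ j : Fin (m + 1), (-1 : ℤ) ^ (j : ℕ) • (g (v j)).curryLeft p (j.removeNth v) =
      f (Fin.cons p v) := by
    have h := hfull (Fin.cons p v)
    rw [hfull_eq, smul_eq_zero_iff_right (Nat.factorial_ne_zero _), Fin.sum_univ_succ] at h
    simp only [Fin.cons_zero, Fin.cons_succ, Fin.removeNth_zero, Fin.tail_cons,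
      Fin.removeNth_succ_cons, Fin.val_zero, pow_zero, one_smul, Fin.val_succ, pow_succ,
      mul_neg_one, neg_smul, Finset.sum_neg_distrib, ← sub_eq_add_neg, sub_eq_zero] at h
    exact h.symm
  rw [Nat.add_sub_cancel, ← hexpand, ← nsmul_eq_mul,
    ← sum_sign_smul_apply_tail_comp_perm (fun u => (g u).curryLeft p) v]
  refine Finset.sum_congr rfl fun π _ => ?_
  erw [Fin.dite_eq_cons_cons p (v ∘ π)]
  simp [g, Units.smul_def, Matrix.vecCons]
end

section
/- Let k ≥ 2 and let f̃ : V^{k+2} → ℝ be a (k+2)-linear map that is alternating in its first two arguments and in its last k arguments, such that the alternation of f̃ over the arguments in positions 2,3,…,k+2 vanishes and the alternation over the arguments in positions 1,2,…,k+1 vanishes (f̃ ∈ E(2,k)). Then for all p, q, v₁, …, vₖ ∈ V: Σ_{π ∈ Sₖ} sgn(π) f̃(v_{π(1)}, q, p, v_{π(2)}, …, v_{π(k)}) = (k−1)! · f̃(p, q, v₁, …, vₖ). In the paper's index notation: f̃_{a¹ q p ȧᵏ} = (1/k) f̃_{p q āᵏ} for f̃ ∈ E(2,k). -/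
/-!
Write `Φ_a(z) = f̃(q, a, z)`; each `Φ_a` is alternating in `z ∈ V^k`. Expanding the vanishing
alternation of `f̃` over its last `k + 1` arguments at `(q, p, v)` according to which entry
lands in the second slot gives `Σ_j Φ_{v_j}(v[j ↦ p]) = f̃(q, p, v)`. On the other side, after
swapping the first two arguments, the summand of index `π` only depends on `j = π(1)`: its
tail `(p, v_{π(2)}, …, v_{π(k)})` is `v[j ↦ p] ∘ π`, and the alternation of `Φ_{v_j}` absorbs
`sgn π`. So the left-hand side is `-(k-1)! Σ_j Φ_{v_j}(v[j ↦ p]) = -(k-1)! f̃(q, p, v)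
= (k-1)! f̃(p, q, v)`.
-/

open Finset Equiv Function
open scoped Nat

namespace MultilinearMap

variable {R M N : Type*} [CommRing R] [AddCommGroup M] [Module R M] [AddCommGroup N] [Module R N]
  {n : ℕ}

theorem map_cons_cons_swap (f : MultilinearMap R (fun _ : Fin (n + 2) => M) N)
    (hf : ∀ w : Fin (n + 2) → M, w 0 = w 1 → f w = 0) (a b : M) (z : Fin n → M) :
    f (Fin.cons a (Fin.cons b z)) = -f (Fin.cons b (Fin.cons a z)) := by
  have hdiag : ∀ x, f (Fin.cons x (Fin.cons x z)) = 0 := fun x => hf _ rfl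
  have h := hdiag (a + b)
  simp only [← curryLeft_apply, map_add, add_apply] at h
  simp only [curryLeft_apply, hdiag, zero_add, add_zero] at h
  exact eq_neg_of_add_eq_zero_left h

def curryTwoAlternating (f : MultilinearMap R (fun _ : Fin (n + 2) => M) N)
    (hf : ∀ (w : Fin (n + 2) → M) (i j : Fin (n + 2)),
      i ≠ j → 2 ≤ (i : ℕ) → 2 ≤ (j : ℕ) → w i = w j → f w = 0) (x y : M) :
    M [⋀^Fin n]→ₗ[R] N where
  toMultilinearMap := (f.curryLeft x).curryLeft y
  map_eq_zero_of_eq' w i j hw hij :=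
    hf _ i.succ.succ j.succ.succ (by simpa using hij) (by simp) (by simp) (by simpa using hw)

@[simp]
theorem curryTwoAlternating_apply (f : MultilinearMap R (fun _ : Fin (n + 2) => M) N) (hf)
    (x y : M) (z : Fin n → M) :
    f.curryTwoAlternating hf x y z = f (Fin.cons x (Fin.cons y z)) := rfl

end MultilinearMap

namespace Equiv.Perm

theorem sum_eq_factorial_smul {A : Type*} [AddCommMonoid A] {n : ℕ}
    (T : Perm (Fin (n + 1)) → A) (c : Fin (n + 1) → A)
    (h : ∀ j e, T (decomposeFin.symm (j, e)) = c j) :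
    ∑ π, T π = n ! • ∑ j, c j := by
  rw [← decomposeFin.symm.sum_comp, Fintype.sum_prod_type]
  simp [h, Finset.smul_sum, Fintype.card_perm]

theorem update_apply_zero_comp {α : Type*} {n : ℕ} (v : Fin (n + 1) → α)
    (π : Perm (Fin (n + 1))) (p : α) :
    update v (π 0) p ∘ π = Fin.cons p (v ∘ π ∘ Fin.succ) := by
  ext i
  refine Fin.cases ?_ (fun i => ?_) i <;> simp

end Equiv.Perm

theorem Fin.tail_cons_comp_swap {α : Type*} {n : ℕ} (p : α) (v : Fin n → α) (m : Fin n) :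
    Fin.tail (Fin.cons p v ∘ Equiv.swap 0 m.succ) = update v m p := by
  ext i
  rcases eq_or_ne i m with rfl | him
  · simp [Fin.tail]
  · simp [Fin.tail, update_of_ne him, swap_apply_of_ne_of_ne (Fin.succ_ne_zero i)
      (Fin.succ_injective _ |>.ne him)]

namespace AlternatingMap

variable {R M N : Type*} [CommRing R] [AddCommGroup M] [Module R M] [AddCommGroup N] [Module R N]
  {n : ℕ}

theorem sum_sign_smul_cons_comp_succ (Φ : M → M [⋀^Fin (n + 1)]→ₗ[R] N) (p : M)
    (v : Fin (n + 1) → M) :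
    ∑ π : Perm (Fin (n + 1)), Perm.sign π • Φ (v (π 0)) (Fin.cons p (v ∘ π ∘ Fin.succ)) =
      n ! • ∑ j, Φ (v j) (update v j p) := by
  refine Perm.sum_eq_factorial_smul _ _ fun j e => ?_
  rw [← Perm.update_apply_zero_comp, map_perm, smul_smul, Int.units_mul_self, one_smul,
    Perm.decomposeFin_symm_apply_zero]

theorem sum_sign_smul_apply_zero_tail (Φ : M → M [⋀^Fin n]→ₗ[R] N) (p : M) (v : Fin n → M) :
    ∑ π : Perm (Fin (n + 1)),
        Perm.sign π • Φ ((Fin.cons p v ∘ π) 0) (Fin.tail (Fin.cons p v ∘ π)) =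
      n ! • (Φ p v - ∑ j, Φ (v j) (update v j p)) := by
  set u : Fin (n + 1) → M := Fin.cons p v
  -- `decomposeFin.symm (j, e)` is `swap 0 j` composed with `e` acting on `1, …, n`
  have htail : ∀ j e, Fin.tail (u ∘ Perm.decomposeFin.symm (j, e)) =
      Fin.tail (u ∘ swap 0 j) ∘ e := fun j e => by
    ext i
    simp [Fin.tail]
  rw [Perm.sum_eq_factorial_smul _
    (fun j => (if j = 0 then 1 else -1 : ℤˣ) • Φ (u j) (Fin.tail (u ∘ swap 0 j)))]
  · simp [Fin.sum_univ_succ, u, Fin.tail_cons_comp_swap, sub_eq_add_neg]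
  · intro j e
    rw [htail, map_perm, Perm.decomposeFin.symm_sign, smul_smul, mul_assoc, Int.units_mul_self,
      mul_one, comp_apply, Perm.decomposeFin_symm_apply_zero]

end AlternatingMap

/-- Let `f̃ : V^{k+2} → ℝ` be `(k+2)`-linear (`k ≥ 2`), alternating in
its first two and in its last `k` arguments, such that the alternation over arguments
`2,…,k+2` vanishes and the alternation over arguments `1,…,k+1` vanishes
(`f̃ ∈ E(2,k)`). Then
`Σ_{π ∈ S_k} sgn(π) f̃(v_{π(1)}, q, p, v_{π(2)}, …, v_{π(k)}) = (k-1)! · f̃(p,q,v₁,…,v_k)`. -/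
theorem E2k_swap_identity
    (V : Type*) [AddCommGroup V] [Module ℝ V]
    (k : ℕ) (hk : 2 ≤ k)
    (f : MultilinearMap ℝ (fun _ : Fin (k + 2) => V) ℝ)
    (haltfirst : ∀ w : Fin (k + 2) → V, w 0 = w 1 → f w = 0)
    (haltlast : ∀ (w : Fin (k + 2) → V) (i j : Fin (k + 2)),
      i ≠ j → 2 ≤ (i : ℕ) → 2 ≤ (j : ℕ) → w i = w j → f w = 0)
    (hlast : ∀ w : Fin (k + 2) → V,
      ∑ π : Equiv.Perm (Fin (k + 1)),
        ((Equiv.Perm.sign π : ℤ) : ℝ) *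
          f (fun i : Fin (k + 2) =>
            if h0 : (i : ℕ) = 0 then w i
            else w (π ⟨(i : ℕ) - 1, by have := i.isLt; omega⟩).succ) = 0) :
    ∀ (p q : V) (v : Fin k → V),
      ∑ π : Equiv.Perm (Fin k),
        ((Equiv.Perm.sign π : ℤ) : ℝ) *
          f (fun i : Fin (k + 2) =>
            if h0 : (i : ℕ) = 0 then v (π ⟨0, by omega⟩)
            else if h1 : (i : ℕ) = 1 then q
            else if h2 : (i : ℕ) = 2 then p
            else v (π ⟨(i : ℕ) - 2, by have := i.isLt; omega⟩))
      = ((k - 1).factorial : ℝ) * f (Fin.cons p (Fin.cons q v)) := by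
  intro p q v
  obtain ⟨n, rfl⟩ : ∃ n, k = n + 1 := ⟨k - 1, by omega⟩
  have hsmul : ∀ (s : ℤˣ) (x : ℝ), ((s : ℤ) : ℝ) * x = s • x := fun s x => by
    rw [Units.smul_def, zsmul_eq_mul]
  have hsum : ∑ j, f.curryTwoAlternating haltlast q (v j) (update v j p) =
      f (Fin.cons q (Fin.cons p v)) := by
    have harg : ∀ π : Perm (Fin (n + 2)), (fun i : Fin (n + 1 + 2) =>
        if h0 : (i : ℕ) = 0 then (Fin.cons q (Fin.cons p v) : Fin (n + 1 + 2) → V) i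
        else (Fin.cons q (Fin.cons p v) : Fin (n + 1 + 2) → V)
          (π ⟨(i : ℕ) - 1, by have := i.isLt; omega⟩).succ) =
        Fin.cons q (Fin.cons ((Fin.cons p v ∘ π) 0) (Fin.tail (Fin.cons p v ∘ π))) :=
      fun π => by
        rw [Fin.cons_self_tail]
        ext i
        refine Fin.cases ?_ (fun i => ?_) i <;> simp
    have h := hlast (Fin.cons q (Fin.cons p v))
    simp only [harg, hsmul, ← MultilinearMap.curryTwoAlternating_apply f haltlast q,
      AlternatingMap.sum_sign_smul_apply_zero_tail (f.curryTwoAlternating haltlast q)] at h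
    exact (sub_eq_zero.1 ((smul_eq_zero.1 h).resolve_left (Nat.factorial_ne_zero _))).symm
  have harg : ∀ π : Perm (Fin (n + 1)), (fun i : Fin (n + 1 + 2) =>
      if h0 : (i : ℕ) = 0 then v (π ⟨0, by omega⟩)
      else if h1 : (i : ℕ) = 1 then q
      else if h2 : (i : ℕ) = 2 then p
      else v (π ⟨(i : ℕ) - 2, by have := i.isLt; omega⟩)) =
      Fin.cons (v (π 0)) (Fin.cons q (Fin.cons p (v ∘ π ∘ Fin.succ))) := fun π => by
    ext i
    rcases i with ⟨_ | _ | _ | i, hi⟩ <;> rfl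
  calc
    _ = ∑ π : Perm (Fin (n + 1)), Perm.sign π •
        -f.curryTwoAlternating haltlast q (v (π 0)) (Fin.cons p (v ∘ π ∘ Fin.succ)) := by
      simp only [harg, hsmul, f.map_cons_cons_swap haltfirst (v _) q,
        MultilinearMap.curryTwoAlternating_apply]
    _ = -(n ! • f (Fin.cons q (Fin.cons p v))) := by
      rw [← hsum, ← AlternatingMap.sum_sign_smul_cons_comp_succ, ← Finset.sum_neg_distrib]
      simp only [smul_neg]
    _ = _ := by
      rw [f.map_cons_cons_swap haltfirst q p, nsmul_eq_mul, Nat.add_sub_cancel, mul_neg, neg_neg]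
end
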